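/- For every i, j ∈ I, every μ ∈ V with B(μ, α_k) = δ_{ik} for all k ∈ I, and every finite (possibly empty) sequence (j₁, …, j_m) of elements of I, one has B(μ, T_{j₁} T_{j₂} ⋯ T_{j_m}(α_j)) ∈ q^{d_j − d_i} · R. -/
import Mathlib


noncomputable section

open scoped BigOperators

/-- The field `K = ℚ(q,t)` of rational functions in two variables over `ℚ`. -/
abbrev KK : Type := FractionRing (MvPolynomial (Fin 2) ℚ)

/-- The variable `q` of `ℚ(q,t)`. -/
def qv : KK := algebraMap (MvPolynomial (Fin 2) ℚ) KK (MvPolynomial.X 0)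

/-- The variable `t` of `ℚ(q,t)`. -/
def tv : KK := algebraMap (MvPolynomial (Fin 2) ℚ) KK (MvPolynomial.X 1)

/-- The quantum integer `[k]_q = (q^k - q^{-k})/(q - q⁻¹)` in `ℚ(q,t)`. -/
def qint (k : ℤ) : KK := (qv ^ k - qv ^ (-k)) / (qv - qv⁻¹)

variable {I : Type}

/-- The `(q,t)`-deformed Cartan matrix `C(q,t)`:
`C_{ii} = q^{d_i} t⁻¹ + q^{-d_i} t` and `C_{ij} = [c_{ij}]_q` for `i ≠ j`. -/
def Cqt [DecidableEq I] (c : I → I → ℤ) (d : I → ℤ) (i j : I) : KK :=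
  if i = j then qv ^ (d i) * tv⁻¹ + qv ^ (-(d i)) * tv else qint (c i j)

/-- The basis vector `α_i` of `V = K^{⊕I}`. -/
def alphaK [DecidableEq I] (i : I) : I → KK := Pi.single i 1

/-- The deformed bilinear form `B` on `V`, determined by
`B(α_i, α_j) = [d_i]_q C_{ij}(q,t)`. -/
def Bform [Fintype I] [DecidableEq I] (c : I → I → ℤ) (d : I → ℤ)
    (lam mu : I → KK) : KK :=
  ∑ i, ∑ j, lam i * mu j * (qint (d i) * Cqt c d i j)

/-- The operator `T_i : V → V`, `T_i(λ) = λ - (q^{-d_i} t/[d_i]_q)·B(α_i, λ)·α_i`. -/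
def Trefl [Fintype I] [DecidableEq I] (c : I → I → ℤ) (d : I → ℤ) (i : I)
    (lam : I → KK) : I → KK :=
  fun k => lam k - (qv ^ (-(d i)) * tv / qint (d i)) * Bform c d (alphaK i) lam * alphaK i k

/-- The subring `R = ℤ[q⁻¹, t]` of `K`, generated by `ℤ`, `q⁻¹` and `t`. -/
def Rring : Subring KK := Subring.closure {qv⁻¹, tv}

/-! ### Auxiliary lemmas -/

lemma alg_inj : Function.Injective (algebraMap (MvPolynomial (Fin 2) ℚ) KK) :=
  IsFractionRing.injective _ _

lemma qv_ne : qv ≠ 0 := by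
  intro h
  have h2 : algebraMap (MvPolynomial (Fin 2) ℚ) KK (MvPolynomial.X 0)
      = algebraMap (MvPolynomial (Fin 2) ℚ) KK 0 := by rw [map_zero]; exact h
  exact MvPolynomial.X_ne_zero 0 (alg_inj h2)

lemma tv_ne : tv ≠ 0 := by
  intro h
  have h2 : algebraMap (MvPolynomial (Fin 2) ℚ) KK (MvPolynomial.X 1)
      = algebraMap (MvPolynomial (Fin 2) ℚ) KK 0 := by rw [map_zero]; exact h
  exact MvPolynomial.X_ne_zero 1 (alg_inj h2)

lemma qv_pow_ne_one (n : ℕ) (hn : n ≠ 0) : qv ^ n ≠ 1 := by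
  intro h
  have h2 : algebraMap (MvPolynomial (Fin 2) ℚ) KK (MvPolynomial.X 0 ^ n) =
      algebraMap (MvPolynomial (Fin 2) ℚ) KK 1 := by rw [map_pow, map_one]; exact h
  have h3 := alg_inj h2
  have := congrArg (MvPolynomial.eval (fun _ => (0:ℚ))) h3
  simp [hn] at this

lemma qsub_ne : qv - qv⁻¹ ≠ 0 := by
  intro h
  have h1 : qv = qv⁻¹ := by linear_combination h
  have h2 : qv ^ 2 = 1 := by
    have h2 := mul_inv_cancel₀ qv_ne
    rw [← h1] at h2
    rw [sq]; exact h2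
  exact qv_pow_ne_one 2 (by norm_num) h2

lemma qv_zpow_ne_one (n : ℤ) (hn : n ≠ 0) : qv ^ n ≠ 1 := by
  intro h
  rcases lt_or_gt_of_ne hn with h' | h'
  · have : qv ^ (-n) = 1 := by
      rw [zpow_neg, h, inv_one]
    rw [show -n = ((-n).toNat : ℤ) by omega, zpow_natCast] at this
    exact qv_pow_ne_one _ (by omega) this
  · rw [show n = (n.toNat : ℤ) by omega, zpow_natCast] at h
    exact qv_pow_ne_one _ (by omega) h

lemma qint_ne (n : ℤ) (hn : 0 < n) : qint n ≠ 0 := by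
  rw [qint, div_ne_zero_iff]
  refine ⟨?_, qsub_ne⟩
  intro h
  have h1 : qv ^ n = qv ^ (-n) := by linear_combination h
  have h2 : qv ^ (2 * n) = 1 := by
    have : qv ^ n * qv ^ n = qv ^ (-n) * qv ^ n := by rw [h1]
    rw [← zpow_add₀ qv_ne, ← zpow_add₀ qv_ne] at this
    simpa [two_mul] using this
  exact qv_zpow_ne_one _ (by omega) h2

lemma qint_natexp (N : ℕ) : qint N = ∑ s ∈ Finset.range N, qv ^ ((N : ℤ) - 1 - 2 * s) := by
  rw [qint, div_eq_iff qsub_ne]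
  have key : ∀ s : ℕ, qv ^ ((N : ℤ) - 1 - 2 * s) * (qv - qv⁻¹)
      = qv ^ ((N:ℤ) - 2*s) - qv ^ ((N:ℤ) - 2*((s:ℤ)+1)) := by
    intro s
    rw [mul_sub]
    congr 1
    · rw [← zpow_add_one₀ qv_ne]; ring_nf
    · rw [← zpow_sub_one₀ qv_ne]; ring_nf
  rw [Finset.sum_mul]
  calc qv ^ (N:ℤ) - qv ^ (-(N:ℤ))
      = ∑ s ∈ Finset.range N, ((fun s : ℕ => qv ^ ((N:ℤ) - 2*s)) s
        - (fun s : ℕ => qv ^ ((N:ℤ) - 2*s)) (s+1)) := by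
        rw [Finset.sum_range_sub' (fun s : ℕ => qv ^ ((N:ℤ) - 2*s))]
        simp only [Nat.cast_zero, mul_zero, sub_zero]
        congr 1
        ring
    _ = ∑ s ∈ Finset.range N, qv ^ ((N : ℤ) - 1 - 2 * s) * (qv - qv⁻¹) := by
        refine Finset.sum_congr rfl fun s _ => ?_
        rw [key s]
        push_cast
        ring_nf

lemma qinv_mem : qv⁻¹ ∈ Rring := Subring.subset_closure (by simp)
lemma tv_mem : tv ∈ Rring := Subring.subset_closure (by simp)

lemma qpow_mem (m : ℤ) (hm : m ≤ 0) : qv ^ m ∈ Rring := by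
  have : qv ^ m = (qv⁻¹) ^ ((-m).toNat) := by
    rw [inv_pow, ← zpow_natCast, Int.toNat_of_nonneg (by omega), zpow_neg, inv_inv]
  rw [this]
  exact pow_mem qinv_mem _

lemma qint_zero : qint 0 = 0 := by simp [qint]

lemma qint_neg (k : ℤ) : qint (-k) = - qint k := by
  simp only [qint, neg_neg]
  rw [← neg_div, neg_sub]

/-- Key membership: `c ≤ 0`, `-c ≤ n` imply `[c]_q · q^{-n} ∈ R`. -/
lemma qint_qpow_mem (cc n : ℤ) (hc : cc ≤ 0) (hn : -cc ≤ n) :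
    qint cc * qv ^ (-n) ∈ Rring := by
  rcases eq_or_lt_of_le hc with h0 | h0
  · rw [h0, qint_zero, zero_mul]; exact zero_mem _
  · have hN : cc = -(((-cc).toNat : ℕ) : ℤ) := by omega
    rw [hN, qint_neg, neg_mul]
    refine neg_mem ?_
    rw [qint_natexp, Finset.sum_mul]
    refine Subring.sum_mem _ fun s hs => ?_
    rw [← zpow_add₀ qv_ne]
    refine qpow_mem _ ?_
    have hs' : (s : ℤ) ≤ (-cc).toNat - 1 := by
      rw [Finset.mem_range] at hs; omega
    omega

section BL
variable [Fintype I] [DecidableEq I] (c : I → I → ℤ) (d : I → ℤ)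

lemma Bform_alpha_right (mu : I → KK) (k : I) :
    Bform c d mu (alphaK k) = ∑ p, mu p * (qint (d p) * Cqt c d p k) := by
  unfold Bform
  refine Finset.sum_congr rfl fun p _ => ?_
  rw [Finset.sum_eq_single k]
  · rw [alphaK, Pi.single_eq_same]; ring
  · intro m _ hm
    rw [alphaK, Pi.single_eq_of_ne hm, mul_zero, zero_mul]
  · intro h; exact absurd (Finset.mem_univ k) h

lemma Bform_right (mu lam : I → KK) :
    Bform c d mu lam = ∑ k, lam k * Bform c d mu (alphaK k) := by
  simp only [Bform_alpha_right]
  unfold Bform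
  rw [Finset.sum_comm]
  refine Finset.sum_congr rfl fun m _ => ?_
  rw [Finset.mul_sum]
  refine Finset.sum_congr rfl fun p _ => ?_
  ring

lemma Bform_alpha_left (a : I) (lam : I → KK) :
    Bform c d (alphaK a) lam = ∑ k, lam k * (qint (d a) * Cqt c d a k) := by
  unfold Bform
  rw [Finset.sum_eq_single a]
  · refine Finset.sum_congr rfl fun k _ => ?_
    rw [alphaK, Pi.single_eq_same]; ring
  · intro m _ hm
    refine Finset.sum_eq_zero fun k _ => ?_
    rw [alphaK, Pi.single_eq_of_ne hm, zero_mul, zero_mul]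
  · intro h; exact absurd (Finset.mem_univ a) h

/-- The induction step: `T_a` preserves the property of having `k`-th
coordinate in `q^{d_j - d_k}·R`. -/
lemma step_lemma
    (hdpos : ∀ i, 0 < d i) (hoff : ∀ i j, i ≠ j → c i j ≤ 0)
    (hbig : ∀ a m, m ≠ a → -(c a m) ≤ d m)
    (j a : I) (lam : I → KK)
    (hlam : ∀ k, ∃ x ∈ Rring, lam k = qv ^ (d j - d k) * x) :
    ∀ k, ∃ x ∈ Rring, Trefl c d a lam k = qv ^ (d j - d k) * x := by
  choose x hxR hxE using hlam
  have hQ : qint (d a) ≠ 0 := qint_ne _ (hdpos a)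
  intro k
  by_cases hka : k = a
  swap
  · refine ⟨x k, hxR k, ?_⟩
    rw [Trefl, alphaK, Pi.single_eq_of_ne hka, mul_zero, sub_zero]
    exact hxE k
  subst hka
  -- the coefficient function
  set y : I → KK := fun m =>
    if m = k then x k * (1 + qv ^ (-(2 * d k)) * tv ^ 2)
    else x m * tv * (qint (c k m) * qv ^ (-(d m))) with hy
  have hyR : ∀ m, y m ∈ Rring := by
    intro m
    by_cases hm : m = k
    · rw [hy]; simp only [if_pos hm]
      exact mul_mem (hxR k) (add_mem (one_mem _)
        (mul_mem (qpow_mem _ (by have := hdpos k; omega)) (pow_mem tv_mem 2)))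
    · rw [hy]; simp only [if_neg hm]
      exact mul_mem (mul_mem (hxR m) tv_mem)
        (qint_qpow_mem _ _ (hoff k m (fun h => hm h.symm)) (hbig k m hm))
  have hterm : ∀ m, (qv ^ (-(d k)) * tv / qint (d k)) * (lam m * (qint (d k) * Cqt c d k m))
      = qv ^ (d j - d k) * y m := by
    intro m
    have hc1 : (qv ^ (-(d k)) * tv / qint (d k)) * (lam m * (qint (d k) * Cqt c d k m))
        = qv ^ (-(d k)) * tv * lam m * Cqt c d k m := by
      calc (qv ^ (-(d k)) * tv / qint (d k)) * (lam m * (qint (d k) * Cqt c d k m))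
          = (qint (d k) * (qint (d k))⁻¹) * (qv ^ (-(d k)) * tv * lam m * Cqt c d k m) := by
            rw [div_eq_mul_inv]; ring
        _ = qv ^ (-(d k)) * tv * lam m * Cqt c d k m := by
            rw [mul_inv_cancel₀ hQ, one_mul]
    rw [hc1, hxE m]
    by_cases hm : m = k
    · subst hm
      rw [Cqt, if_pos rfl, hy]
      simp only [eq_self_iff_true, if_true]
      have h2 : qv ^ (-(d m)) * qv ^ (d m) = 1 := by
        rw [← zpow_add₀ qv_ne]; simp
      have h3 : qv ^ (-(d m)) * qv ^ (-(d m)) = qv ^ (-(2 * d m)) := by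
        rw [← zpow_add₀ qv_ne]; congr 1; ring
      have hT : tv * tv⁻¹ = 1 := mul_inv_cancel₀ tv_ne
      linear_combination (qv ^ (d j - d m) * x m * tv * tv⁻¹) * h2
        + (qv ^ (d j - d m) * x m) * hT
        + (qv ^ (d j - d m) * x m * tv ^ 2) * h3
    · rw [Cqt, if_neg (fun h => hm h.symm), hy]
      simp only [if_neg hm]
      have h1 : qv ^ (-(d k)) * qv ^ (d j - d m) = qv ^ (d j - d k) * qv ^ (-(d m)) := by
        rw [← zpow_add₀ qv_ne, ← zpow_add₀ qv_ne]; congr 1; ring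
      linear_combination (tv * x m * qint (c k m)) * h1
  refine ⟨x k - ∑ m, y m, sub_mem (hxR k) (Subring.sum_mem _ fun m _ => hyR m), ?_⟩
  have hexp : Trefl c d k lam k
      = lam k - ∑ m, ((qv ^ (-(d k)) * tv / qint (d k)) * (lam m * (qint (d k) * Cqt c d k m))) := by
    rw [Trefl, Bform_alpha_left, alphaK, Pi.single_eq_same, mul_one, Finset.mul_sum]
  rw [hexp, hxE k]
  rw [Finset.sum_congr rfl (fun m _ => hterm m), ← Finset.mul_sum, ← mul_sub]
end BL

theorem statement_14
    {I : Type} [Fintype I] [DecidableEq I] [Nonempty I]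
    (c : I → I → ℤ) (d : I → ℤ) (r : ℤ)
    -- `C` is a symmetrizable generalized Cartan matrix
    (hdiag : ∀ i, c i i = 2)
    (hoff : ∀ i j, i ≠ j → c i j ≤ 0)
    -- `(d_i)` are positive integers with gcd 1 symmetrizing `C`
    (hdpos : ∀ i, 0 < d i)
    (hgcd : Finset.univ.gcd d = 1)
    (hsymm : ∀ i j, d i * c i j = d j * c j i)
    -- each `d_i ∈ {1, r}` where `r = max_i d_i`
    (honer : ∀ i, d i = 1 ∨ d i = r)
    (hrmax : ∀ i, d i ≤ r)
    (hrmem : ∃ i, d i = r)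
    -- `d_i c_{ij} = -max(d_i, d_j)` whenever `i ≠ j` and `c_{ij} ≠ 0`
    (hbmax : ∀ i j, i ≠ j → c i j ≠ 0 → d i * c i j = -(max (d i) (d j)))
    :
    ∀ (i j : I) (mu : I → KK),
      (∀ k, Bform c d mu (alphaK k) = if i = k then 1 else 0) →
      ∀ js : List I, ∃ x ∈ Rring,
        Bform c d mu (js.foldr (fun a acc => Trefl c d a acc) (alphaK j)) =
          qv ^ (d j - d i) * x
    := by
  have hbig : ∀ a m, m ≠ a → -(c a m) ≤ d m := by
    intro a m hm
    by_cases h0 : c a m = 0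
    · rw [h0]; simpa using (hdpos m).le
    · have h1 := hbmax a m (fun h => hm h.symm) h0
      have h2 : d a * (-(c a m)) = max (d a) (d m) := by linarith
      have h3 : max (d a) (d m) ≤ d a * d m := by
        rcases max_choice (d a) (d m) with h | h <;> rw [h] <;>
          nlinarith [hdpos a, hdpos m]
      exact le_of_mul_le_mul_left (by linarith) (hdpos a)
  intro i j mu hmu js
  have main : ∀ k, ∃ x ∈ Rring,
      (js.foldr (fun a acc => Trefl c d a acc) (alphaK j)) k = qv ^ (d j - d k) * x := by
    induction js with
    | nil =>
      intro k
      by_cases hk : k = j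
      · subst hk
        exact ⟨1, one_mem _, by simp [alphaK, Pi.single_eq_same]⟩
      · exact ⟨0, zero_mem _, by simp [alphaK, Pi.single_eq_of_ne hk]⟩
    | cons a js ih =>
      simpa only [List.foldr_cons] using
        step_lemma c d hdpos hoff hbig j a _ ih
  obtain ⟨x, hxR, hx⟩ := main i
  refine ⟨x, hxR, ?_⟩
  rw [Bform_right]
  simp only [hmu, mul_ite, mul_one, mul_zero]
  rw [Finset.sum_ite_eq]
  simp only [Finset.mem_univ, if_true]
  exact hx
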